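/- arXiv:2011.11595 — 4 statements merged into one kernel-verified Lean document; each statement's English description precedes it below -/
import Mathlib

section
/- Let J(j,s,k) = s·d_j + s̄·T·(d1·ȳ1(j,k) + d2·ȳ2(j,k)) where ȳ1(j,k) = (k - k_ref - p_j + T·r2)/(T·(p1+r2)) and ȳ2(j,k) = 1 - ȳ1(j,k). Then J(1,s,k) - J(2,s,k) = (d1 - d2)·(s - s̄). In particular, if d1 < d2 then arc 1 is strictly preferred if and only if s > s̄. -/
/-- The cost difference between arcs under the budget-tight future allocation is
`(d1 - d2)·(s - s̄)`; hence with `d1 < d2`, arc 1 is strictly preferred iff `s > s̄`. -/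
theorem stmt2 (d1 d2 p1 r2 T s sbar k kref : ℝ)
    (hp1 : 0 < p1) (hr2 : 0 < r2) (hpr : 0 < p1 + r2) (hT : 0 < T) :
    let ybar1 : ℝ → ℝ := fun pj => (k - kref - pj + T * r2) / (T * (p1 + r2))
    let J : ℝ → ℝ → ℝ := fun pj dj =>
      s * dj + sbar * T * (d1 * ybar1 pj + d2 * (1 - ybar1 pj))
    J p1 d1 - J (-r2) d2 = (d1 - d2) * (s - sbar) ∧
      (d1 < d2 → (J p1 d1 < J (-r2) d2 ↔ sbar < s)) := by
  intro ybar1 J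
  have hne : T * (p1 + r2) ≠ 0 := by positivity
  have key : J p1 d1 - J (-r2) d2 = (d1 - d2) * (s - sbar) := by
    simp only [J, ybar1]
    field_simp
    ring
  refine ⟨key, fun hd => ?_⟩
  constructor
  · intro h
    have : (d1 - d2) * (s - sbar) < 0 := by linarith [key]
    nlinarith
  · intro h
    have : (d1 - d2) * (s - sbar) < 0 := by nlinarith
    linarith [key]
end

section
/- Let J(1,s,k) = s·d1 + s̄·(d1·(k - k_ref - p1 + T·r2) - d2·(k - k_ref - (T+1)·p1))/(p1 + r2) and J(2,s,k) = s·d2 + s̄·T·d1. Then J(1,s,k) - J(2,s,k) = (d1 - d2)·(s - s̄·(k_wealthy - k)/(p1 + r2)) where k_wealthy = k_ref + (T+1)·p1. In particular, if d1 < d2, arc 1 is strictly preferred exactly when s > s̄·(k_wealthy - k)/(p1 + r2). -/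
/-- In the "rich" Karma regime the cost difference is
`(d1-d2)·(s - s̄·(k_wealthy-k)/(p1+r2))`. -/
theorem stmt3 (d1 d2 p1 r2 T s sbar k kref : ℝ)
    (hp1 : 0 < p1) (hr2 : 0 < r2) (hpr : 0 < p1 + r2) (hT : 0 < T)
    (hs : 0 ≤ s) (hsbar : 0 < sbar)
    (hk1 : kref + T * p1 - r2 < k) (hk2 : k < kref + (T + 1) * p1) :
    let kwealthy : ℝ := kref + (T + 1) * p1
    let J1 : ℝ := s * d1 +
      sbar * (d1 * (k - kref - p1 + T * r2) - d2 * (k - kref - (T + 1) * p1)) / (p1 + r2)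
    let J2 : ℝ := s * d2 + sbar * T * d1
    J1 - J2 = (d1 - d2) * (s - sbar * (kwealthy - k) / (p1 + r2)) ∧
      (d1 < d2 → (J1 < J2 ↔ sbar * (kwealthy - k) / (p1 + r2) < s)) := by
  intro kwealthy J1 J2
  have hne : (p1 + r2) ≠ 0 := ne_of_gt hpr
  have heq : J1 - J2 = (d1 - d2) * (s - sbar * (kwealthy - k) / (p1 + r2)) := by
    simp only [J1, J2, kwealthy]
    field_simp
    ring
  refine ⟨heq, fun hd => ?_⟩
  constructor
  · intro h
    have h2 : J1 - J2 < 0 := by linarith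
    rw [heq] at h2
    have hdd : d1 - d2 < 0 := by linarith
    rcases mul_neg_iff.mp h2 with ⟨h3, _⟩ | ⟨_, h4⟩
    · linarith
    · linarith
  · intro h
    have : J1 - J2 < 0 := by
      rw [heq]
      have hdd : d1 - d2 < 0 := by linarith
      nlinarith
    linarith
end

section
/- If k ≥ k_wealthy = k_ref + (T+1)·p1, then for both choices y = (1,0) and y = (0,1) the Karma budget constraint is inactive for the future allocation ȳ = (1,0); consequently, when d1 < d2, the optimal choice is arc 1 with objective s·d1 + T·s̄·d1, which is strictly less than the objective of any feasible alternative. -/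
/-- For `k ≥ k_wealthy` the budget constraint is inactive for the future allocation
`ȳ = (1,0)` for either today's choice, and with `d1 < d2` arc 1 with `ȳ = (1,0)` is
strictly better than any feasible alternative. -/
theorem stmt8 (p1 r2 T kref k s sbar d1 d2 : ℝ)
    (hp1 : 0 < p1) (hr2 : 0 < r2) (hT : 0 < T) (hkref : 0 ≤ kref)
    (hs : 0 < s) (hsbar : 0 < sbar) (hd1 : 0 ≤ d1) (hd : d1 < d2)
    (hk : kref + (T + 1) * p1 ≤ k) :
    (∀ y1 : ℝ, (y1 = 1 ∨ y1 = 0) →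
      kref ≤ k - (p1 * y1 - r2 * (1 - y1)) - T * p1)
    ∧ (∀ y1 ybar1 : ℝ, (y1 = 1 ∨ y1 = 0) → ybar1 ∈ Set.Icc (0:ℝ) 1 →
        p1 * y1 - r2 * (1 - y1) ≤ k →
        kref ≤ k - (p1 * y1 - r2 * (1 - y1)) - T * (p1 * ybar1 - r2 * (1 - ybar1)) →
        ¬ (y1 = 1 ∧ ybar1 = 1) →
        s * d1 + T * sbar * d1 <
          s * (d1 * y1 + d2 * (1 - y1)) + T * sbar * (d1 * ybar1 + d2 * (1 - ybar1))) := by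
  constructor
  · rintro y1 (rfl | rfl) <;> nlinarith
  · rintro y1 ybar1 (rfl | rfl) ⟨h0, h1⟩ _ _ hne
    · have : ybar1 < 1 := lt_of_le_of_ne h1 (fun h => hne ⟨rfl, h⟩)
      nlinarith [mul_pos (mul_pos (mul_pos hT hsbar) (sub_pos.2 hd)) (sub_pos.2 this)]
    · nlinarith [mul_pos hT hsbar, mul_nonneg (mul_pos hT hsbar).le (sub_nonneg.2 h1), mul_nonneg (mul_pos hT hsbar).le h0]
end

section
/- If the feasibility assumption r2/p1 ∈ [1/T, T] holds with p1, r2 > 0 and T ≥ 1, then for each choice j ∈ {1,2} of today's arc there exists ȳ ∈ [0,1]² with ȳ₁ + ȳ₂ = 1 such that p_j + T·(p1·ȳ₁ - r2·ȳ₂) = 0, i.e., Karma-neutral planning over the horizon is feasible regardless of today's choice. -/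
/-! The net Karma change `y ↦ pj + T * (p1 * y - r2 * (1 - y))` is affine in the share `y` of
future days spent on arc 1, equal to `pj - T * r2` at `y = 0` and to `pj + T * p1` at `y = 1`.
The feasibility assumption says exactly that both of today's prices lie between `-T * p1` and
`T * r2`, so the change has a root in `[0, 1]` by the intermediate value theorem. -/

theorem exists_mem_Icc_add_mul_sub_eq_zero {p1 r2 T pj : ℝ}
    (hle : pj ≤ T * r2) (hge : -(T * p1) ≤ pj) :
    ∃ y ∈ Set.Icc (0:ℝ) 1, pj + T * (p1 * y - r2 * (1 - y)) = 0 := by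
  have hivt := intermediate_value_Icc zero_le_one
    (f := fun y : ℝ => pj + T * (p1 * y - r2 * (1 - y))) (by fun_prop)
  exact hivt ⟨by simpa using sub_nonpos.mpr hle, by simpa using neg_le_iff_add_nonneg.mp hge⟩

theorem stmt14_general (p1 r2 T : ℝ) (hp1 : 0 < p1) (hr2 : 0 < r2)
    (hratio1 : 1 / T ≤ r2 / p1) (hratio2 : r2 / p1 ≤ T) :
    ∀ pj : ℝ, (pj = p1 ∨ pj = -r2) →
      ∃ ybar1 ∈ Set.Icc (0:ℝ) 1, pj + T * (p1 * ybar1 - r2 * (1 - ybar1)) = 0 := by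
  intro pj hpj
  have hT : 0 < T := (div_pos hr2 hp1).trans_le hratio2
  have hp1_le : p1 ≤ T * r2 := by
    have := (div_le_div_iff₀ hT hp1).mp hratio1
    linarith
  have hr2_le : r2 ≤ T * p1 := (div_le_iff₀ hp1).mp hratio2
  apply exists_mem_Icc_add_mul_sub_eq_zero <;> rcases hpj with rfl | rfl <;> nlinarith

/-- Under the feasibility assumption, Karma-neutral planning over the horizon is
feasible regardless of today's arc choice. -/
theorem stmt14 (p1 r2 T : ℝ) (hp1 : 0 < p1) (hr2 : 0 < r2) (hT : 1 ≤ T)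
    (hratio1 : 1 / T ≤ r2 / p1) (hratio2 : r2 / p1 ≤ T) :
    ∀ pj : ℝ, (pj = p1 ∨ pj = -r2) →
      ∃ ybar1 ∈ Set.Icc (0:ℝ) 1, pj + T * (p1 * ybar1 - r2 * (1 - ybar1)) = 0 :=
  stmt14_general p1 r2 T hp1 hr2 hratio1 hratio2
end
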